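/- arXiv:2004.02210 — 3 statements merged into one kernel-verified Lean document; each statement's English description precedes it below -/
import Mathlib

section
/- Under Assumption A, let k ∈ ℕ, λ > 0, ρ ∈ (0,1), and x_k ∈ ℝ^d. Then U_k² ≤ (∫_{ℝ^d} ‖x − x*‖₂² exp[−ρ^{−k}((l/2)‖x − x*‖₂² + (λ/2)‖x − x_k‖₂²)] dx) / (∫_{ℝ^d} exp[−ρ^{−k}((L/2)‖x − x*‖₂² + (λ/2)‖x − x_k‖₂²)] dx). -/
/-!
Normalise the Gibbs weight `g = exp (-ρ⁻ᵏ (f + λ/2 ‖· - x_k‖²))` to a probability density.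
Then `U` is the mean of `‖x - x*‖`, so `U²` is at most the second moment `∫ ‖x - x*‖² g / ∫ g`,
because the variance is nonnegative. The quadratic envelopes of `f` squeeze `g` between
`exp (-ρ⁻ᵏ f*)` times the two Gaussian weights of the statement. The common factor cancels in the
ratio, so the numerator is bounded by the `l`-weight and the denominator by the `L`-weight.
Every weight involved is dominated by a Gaussian centred at `x*`, so all integrals are finite.
-/

open MeasureTheory Real

section WeightedMean

variable {α : Type*} [MeasurableSpace α] {μ : Measure α}

theorem MeasureTheory.Integrable.mul_of_integrable_sq_mul {r g : α → ℝ} (hg : Integrable g μ)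
    (hr : AEStronglyMeasurable r μ) (hr2g : Integrable (fun x => r x ^ 2 * g x) μ) :
    Integrable (fun x => r x * g x) μ :=
  (hg.norm.add hr2g.norm).mono' (hr.mul hg.1) <| ae_of_all _ fun x => by
    simp only [norm_mul, norm_pow, Real.norm_eq_abs, sq_abs, Pi.add_apply]
    nlinarith [abs_nonneg (g x), sq_abs (r x),
      mul_nonneg (abs_nonneg (g x)) (sq_nonneg (|r x| - 1))]

/-- The variance of `r` under the normalised weight `g` is nonnegative. -/
theorem sq_integral_mul_div_le_integral_sq_mul_div {r g : α → ℝ} (hg : 0 ≤ᵐ[μ] g)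
    (hg_int : Integrable g μ) (hrg : Integrable (fun x => r x * g x) μ)
    (hr2g : Integrable (fun x => r x ^ 2 * g x) μ) :
    ((∫ x, r x * g x ∂μ) / ∫ x, g x ∂μ) ^ 2 ≤ (∫ x, r x ^ 2 * g x ∂μ) / ∫ x, g x ∂μ := by
  set m := (∫ x, r x * g x ∂μ) / ∫ x, g x ∂μ
  rcases (integral_nonneg_of_ae hg).eq_or_lt with hzero | hpos
  · simp [m, ← hzero]
  have hm : m * ∫ x, g x ∂μ = ∫ x, r x * g x ∂μ := div_mul_cancel₀ _ hpos.ne'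
  have hvar : 0 ≤ ∫ x, (r x - m) ^ 2 * g x ∂μ :=
    integral_nonneg_of_ae (hg.mono fun x hx => mul_nonneg (sq_nonneg _) hx)
  have hexpand : ∫ x, (r x - m) ^ 2 * g x ∂μ
      = (∫ x, r x ^ 2 * g x ∂μ) - m ^ 2 * ∫ x, g x ∂μ := by
    have hpoint : ∀ x, (r x - m) ^ 2 * g x = r x ^ 2 * g x - 2 * m * (r x * g x) + m ^ 2 * g x :=
      fun x => by ring
    rw [integral_congr_ae (ae_of_all _ hpoint), integral_add, integral_sub, integral_const_mul,
      integral_const_mul, ← hm]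
    · ring
    exacts [hr2g, hrg.const_mul _, hr2g.sub (hrg.const_mul _), hg_int.const_mul _]
  rw [le_div_iff₀ hpos]
  linarith

theorem integral_mul_div_integral_le_of_le_of_le {w g G₁ G₂ : α → ℝ} {c : ℝ} (hc : 0 < c)
    (hw : ∀ x, 0 ≤ w x) (hg₀ : ∀ x, 0 ≤ g x) (hg_le : ∀ x, g x ≤ c * G₁ x)
    (hle_g : ∀ x, c * G₂ x ≤ g x)
    (hwg : Integrable (fun x => w x * g x) μ) (hwG₁ : Integrable (fun x => w x * G₁ x) μ)
    (hg : Integrable g μ) (hG₂ : Integrable G₂ μ) (hG₂_pos : 0 < ∫ x, G₂ x ∂μ) :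
    (∫ x, w x * g x ∂μ) / ∫ x, g x ∂μ ≤ (∫ x, w x * G₁ x ∂μ) / ∫ x, G₂ x ∂μ := by
  have hnum : ∫ x, w x * g x ∂μ ≤ c * ∫ x, w x * G₁ x ∂μ := by
    rw [← integral_const_mul]
    refine integral_mono hwg (hwG₁.const_mul c) fun x => ?_
    simpa only [mul_left_comm] using mul_le_mul_of_nonneg_left (hg_le x) (hw x)
  have hden : c * ∫ x, G₂ x ∂μ ≤ ∫ x, g x ∂μ := by
    rw [← integral_const_mul]
    exact integral_mono (hG₂.const_mul c) hg hle_g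
  have hwg₀ : 0 ≤ ∫ x, w x * g x ∂μ := integral_nonneg fun x => mul_nonneg (hw x) (hg₀ x)
  calc (∫ x, w x * g x ∂μ) / ∫ x, g x ∂μ
      ≤ (c * ∫ x, w x * G₁ x ∂μ) / (c * ∫ x, G₂ x ∂μ) :=
        div_le_div₀ (hwg₀.trans hnum) hnum (by positivity) hden
    _ = (∫ x, w x * G₁ x ∂μ) / ∫ x, G₂ x ∂μ := mul_div_mul_left _ _ hc.ne'

end WeightedMean

section Gaussian

variable {V : Type*} [NormedAddCommGroup V] [InnerProductSpace ℝ V] [FiniteDimensional ℝ V]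
  [MeasurableSpace V] [BorelSpace V]

theorem integrable_exp_neg_mul_sq_norm_sub {b : ℝ} (hb : 0 < b) (c : V) :
    Integrable (fun x : V => exp (-(b * ‖x - c‖ ^ 2))) := by
  have h := (GaussianFourier.integrable_cexp_neg_mul_sq_norm_add (V := V) (b := (b : ℂ))
    (by simpa using hb) 0 0).norm
  simpa [Complex.norm_exp, neg_mul, ← Complex.ofReal_pow] using h.comp_sub_right c

theorem mul_exp_neg_mul_le {b : ℝ} (hb : 0 < b) (t : ℝ) :
    t * exp (-(b * t)) ≤ 2 / b * exp (-(b / 2 * t)) := by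
  have hlin : b / 2 * t ≤ exp (b / 2 * t) := by linarith [add_one_le_exp (b / 2 * t)]
  calc t * exp (-(b * t)) = 2 / b * (b / 2 * t) * exp (-(b * t)) := by field_simp
    _ ≤ 2 / b * exp (b / 2 * t) * exp (-(b * t)) := by gcongr
    _ = 2 / b * exp (-(b / 2 * t)) := by rw [mul_assoc, ← exp_add]; ring_nf

theorem integrable_sq_norm_sub_mul_exp_neg_mul_sq_norm_sub {b : ℝ} (hb : 0 < b) (c : V) :
    Integrable (fun x : V => ‖x - c‖ ^ 2 * exp (-(b * ‖x - c‖ ^ 2))) :=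
  ((integrable_exp_neg_mul_sq_norm_sub (half_pos hb) c).const_mul (2 / b)).mono'
    (by fun_prop) (ae_of_all _ fun x => by
      rw [norm_of_nonneg (by positivity)]
      exact mul_exp_neg_mul_le hb _)

variable {ψ : V → ℝ} {a b : ℝ} {c : V}

theorem integrable_exp_neg_of_quadratic_le (hψ : Measurable ψ) (hb : 0 < b)
    (hle : ∀ x, a + b * ‖x - c‖ ^ 2 ≤ ψ x) : Integrable (fun x => exp (-ψ x)) :=
  ((integrable_exp_neg_mul_sq_norm_sub hb c).const_mul (exp (-a))).mono'
    hψ.neg.exp.aestronglyMeasurable (ae_of_all _ fun x => by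
      rw [norm_of_nonneg (exp_pos _).le, ← exp_add]
      exact exp_le_exp.2 (by linarith [hle x]))

theorem integrable_sq_norm_sub_mul_exp_neg_of_quadratic_le (hψ : Measurable ψ) (hb : 0 < b)
    (hle : ∀ x, a + b * ‖x - c‖ ^ 2 ≤ ψ x) :
    Integrable (fun x => ‖x - c‖ ^ 2 * exp (-ψ x)) :=
  ((integrable_sq_norm_sub_mul_exp_neg_mul_sq_norm_sub hb c).const_mul (exp (-a))).mono'
    (by fun_prop) (ae_of_all _ fun x => by
      rw [norm_of_nonneg (by positivity), mul_left_comm, ← exp_add]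
      gcongr
      linarith [hle x])

end Gaussian

theorem Uk_sq_le_envelope_ratio_general
    (d : ℕ)
    (f : EuclideanSpace ℝ (Fin d) → ℝ) (hf : Measurable f)
    (xs : EuclideanSpace ℝ (Fin d)) (l L : ℝ) (hl : 0 < l) (hlL : l ≤ L)
    (hlow : ∀ x, f xs + l / 2 * ‖x - xs‖ ^ 2 ≤ f x)
    (hup : ∀ x, f x ≤ f xs + L / 2 * ‖x - xs‖ ^ 2)
    (k : ℕ) (lam ρ : ℝ) (hlam : 0 < lam) (hρ0 : 0 < ρ)
    (xk : EuclideanSpace ℝ (Fin d))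
    (U : ℝ)
    (hU : U = (∫ x : EuclideanSpace ℝ (Fin d),
        ‖x - xs‖ * Real.exp (-((ρ ^ k)⁻¹ * (f x + lam / 2 * ‖x - xk‖ ^ 2)))) /
      ∫ x : EuclideanSpace ℝ (Fin d),
        Real.exp (-((ρ ^ k)⁻¹ * (f x + lam / 2 * ‖x - xk‖ ^ 2)))) :
    U ^ 2 ≤ (∫ x : EuclideanSpace ℝ (Fin d),
        ‖x - xs‖ ^ 2 *
          Real.exp (-((ρ ^ k)⁻¹ * (l / 2 * ‖x - xs‖ ^ 2 + lam / 2 * ‖x - xk‖ ^ 2)))) /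
      ∫ x : EuclideanSpace ℝ (Fin d),
        Real.exp (-((ρ ^ k)⁻¹ * (L / 2 * ‖x - xs‖ ^ 2 + lam / 2 * ‖x - xk‖ ^ 2))) := by
  set β := (ρ ^ k)⁻¹
  have hβ : 0 < β := by positivity
  have hL : 0 < L := hl.trans_le hlL
  have hq x : 0 ≤ β * (lam / 2 * ‖x - xk‖ ^ 2) := by positivity
  have h_low x := mul_le_mul_of_nonneg_left (hlow x) hβ.le
  have h_up x := mul_le_mul_of_nonneg_left (hup x) hβ.le
  have hψ x : β * f xs + β * (l / 2) * ‖x - xs‖ ^ 2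
      ≤ β * (f x + lam / 2 * ‖x - xk‖ ^ 2) := by linarith [h_low x, hq x]
  have hψl x : 0 + β * (l / 2) * ‖x - xs‖ ^ 2
      ≤ β * (l / 2 * ‖x - xs‖ ^ 2 + lam / 2 * ‖x - xk‖ ^ 2) := by linarith [hq x]
  have hψL x : 0 + β * (L / 2) * ‖x - xs‖ ^ 2
      ≤ β * (L / 2 * ‖x - xs‖ ^ 2 + lam / 2 * ‖x - xk‖ ^ 2) := by linarith [hq x]
  have hg := integrable_exp_neg_of_quadratic_le (by fun_prop) (by positivity) hψ
  have hr2g := integrable_sq_norm_sub_mul_exp_neg_of_quadratic_le (by fun_prop) (by positivity) hψ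
  have hrg := hg.mul_of_integrable_sq_mul (r := fun x => ‖x - xs‖) (by fun_prop) hr2g
  have hr2Gl :=
    integrable_sq_norm_sub_mul_exp_neg_of_quadratic_le (by fun_prop) (by positivity) hψl
  have hGu := integrable_exp_neg_of_quadratic_le (by fun_prop) (by positivity) hψL
  rw [hU]
  calc _ ≤ _ := sq_integral_mul_div_le_integral_sq_mul_div
        (ae_of_all _ fun x => (exp_pos _).le) hg hrg hr2g
    _ ≤ _ := integral_mul_div_integral_le_of_le_of_le (exp_pos (-(β * f xs)))
        (fun x => by positivity) (fun x => (exp_pos _).le)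
        (fun x => by rw [← exp_add]; exact exp_le_exp.2 (by linarith [h_low x]))
        (fun x => by rw [← exp_add]; exact exp_le_exp.2 (by linarith [h_up x]))
        hr2g hr2Gl hg hGu (integral_exp_pos hGu)

/-- First step of Lemma 3.3: under Assumption A, `U_k²` is bounded by a ratio of
Gaussian-type integrals with the quadratic lower/upper envelopes of `f`. -/
theorem Uk_sq_le_envelope_ratio
    (d : ℕ) (hd : 1 ≤ d)
    (f : EuclideanSpace ℝ (Fin d) → ℝ) (hf : Measurable f)
    (xs : EuclideanSpace ℝ (Fin d)) (l L : ℝ) (hl : 0 < l) (hlL : l ≤ L)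
    (hlow : ∀ x, f xs + l / 2 * ‖x - xs‖ ^ 2 ≤ f x)
    (hup : ∀ x, f x ≤ f xs + L / 2 * ‖x - xs‖ ^ 2)
    (k : ℕ) (lam ρ : ℝ) (hlam : 0 < lam) (hρ0 : 0 < ρ) (hρ1 : ρ < 1)
    (xk : EuclideanSpace ℝ (Fin d))
    (U : ℝ)
    (hU : U = (∫ x : EuclideanSpace ℝ (Fin d),
        ‖x - xs‖ * Real.exp (-((ρ ^ k)⁻¹ * (f x + lam / 2 * ‖x - xk‖ ^ 2)))) /
      ∫ x : EuclideanSpace ℝ (Fin d),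
        Real.exp (-((ρ ^ k)⁻¹ * (f x + lam / 2 * ‖x - xk‖ ^ 2)))) :
    U ^ 2 ≤ (∫ x : EuclideanSpace ℝ (Fin d),
        ‖x - xs‖ ^ 2 *
          Real.exp (-((ρ ^ k)⁻¹ * (l / 2 * ‖x - xs‖ ^ 2 + lam / 2 * ‖x - xk‖ ^ 2)))) /
      ∫ x : EuclideanSpace ℝ (Fin d),
        Real.exp (-((ρ ^ k)⁻¹ * (L / 2 * ‖x - xs‖ ^ 2 + lam / 2 * ‖x - xk‖ ^ 2))) :=
  Uk_sq_le_envelope_ratio_general d f hf xs l L hl hlL hlow hup k lam ρ hlam hρ0 xk U hU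
end

section
/- Under Assumption A, let k ∈ ℕ, λ > 0, ρ ∈ (0,1), and x_k ∈ ℝ^d. Then the expectation of ψ_k under the Gaussian measure N(x_k, ρ^k λ^{−1} I_d) satisfies the lower bound E[ψ_k] ≥ exp(−ρ^{−k} f*) · (λ/(L+λ))^{d/2} · exp(−ρ^{−k} Lλ‖x_k − x*‖₂² / (2(L+λ))). -/
/-!
Bounding `f` above by its quadratic majorant `f* + (L/2)‖x - x*‖²` bounds the integrand below by a
product of two Gaussians. Completing the square turns this product into a single Gaussian of precision
`ρ^{-k}(L + λ)` centred between `x*` and `x_k`, times the factor `exp(-ρ^{-k} Lλ‖x_k - x*‖²/(2(L+λ)))`,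
and the Gaussian integral `∫ exp(-c‖x‖²) = (π/c)^{d/2}` gives the constant `(λ/(L+λ))^{d/2}`.
-/

open MeasureTheory Real Module

section GaussianLowerBound

variable {V : Type*} [NormedAddCommGroup V] [InnerProductSpace ℝ V]

theorem mul_norm_sub_sq_add_mul_norm_sub_sq {a b : ℝ} (hab : a + b ≠ 0) (x u w : V) :
    a * ‖x - u‖ ^ 2 + b * ‖x - w‖ ^ 2 =
      (a + b) * ‖x - (a + b)⁻¹ • (a • u + b • w)‖ ^ 2 + a * b / (a + b) * ‖u - w‖ ^ 2 := by
  have hxu : x - u = (x - w) - (u - w) := by abel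
  have hxm : x - (a + b)⁻¹ • (a • u + b • w) = (x - w) - (a / (a + b)) • (u - w) := by
    match_scalars <;> field_simp
    ring
  rw [hxu, hxm]
  generalize x - w = y
  generalize u - w = z
  rw [norm_sub_sq_real, norm_sub_sq_real, real_inner_smul_right, norm_smul, mul_pow,
    Real.norm_eq_abs, sq_abs]
  field_simp
  ring

variable [FiniteDimensional ℝ V] [MeasurableSpace V] [BorelSpace V]

theorem integrable_exp_neg_mul_norm_sub_sq {b : ℝ} (hb : 0 < b) (m : V) :
    Integrable (fun x : V => rexp (-b * ‖x - m‖ ^ 2)) := by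
  have hcexp := GaussianFourier.integrable_cexp_neg_mul_sq_norm_add
    (V := V) (b := (b : ℂ)) (by simpa using hb) 0 (0 : V)
  have hcentred : Integrable (fun x : V => rexp (-b * ‖x‖ ^ 2)) := by
    refine hcexp.re.congr (Filter.Eventually.of_forall fun v => ?_)
    simp only [zero_mul, add_zero, RCLike.re_to_complex]
    rw [show -(b : ℂ) * (‖v‖ : ℂ) ^ 2 = ((-b * ‖v‖ ^ 2 : ℝ) : ℂ) by push_cast; ring]
    exact Complex.exp_ofReal_re _
  exact hcentred.comp_sub_right m

theorem integral_exp_neg_mul_norm_sub_sq {b : ℝ} (hb : 0 < b) (m : V) :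
    ∫ x : V, rexp (-b * ‖x - m‖ ^ 2) = (π / b) ^ (finrank ℝ V / 2 : ℝ) := by
  rw [integral_sub_right_eq_self (fun x : V => rexp (-b * ‖x‖ ^ 2)) m]
  exact GaussianFourier.integral_rexp_neg_mul_sq_norm hb

theorem le_integral_exp_neg_mul_exp_neg_norm_sub_sq {g : V → ℝ} (hg : Measurable g)
    {xs xk : V} {a b : ℝ} (ha : 0 ≤ a) (hb : 0 < b)
    (hmin : ∀ x, g xs ≤ g x) (hle : ∀ x, g x ≤ g xs + a / 2 * ‖x - xs‖ ^ 2) :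
    rexp (-g xs) * (2 * π / (a + b)) ^ (finrank ℝ V / 2 : ℝ) *
        rexp (-(a * b / (a + b) * ‖xs - xk‖ ^ 2 / 2))
      ≤ ∫ x, rexp (-g x) * rexp (-(b * ‖x - xk‖ ^ 2 / 2)) := by
  have hab : 0 < a + b := by linarith
  set m : V := (a + b)⁻¹ • (a • xs + b • xk)
  set D := a * b / (a + b) * ‖xs - xk‖ ^ 2 / 2 with hD
  have hintegrable : Integrable fun x => rexp (-g x) * rexp (-(b * ‖x - xk‖ ^ 2 / 2)) := by
    refine ((integrable_exp_neg_mul_norm_sub_sq (half_pos hb) xk).const_mul (rexp (-g xs))).mono'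
      (by fun_prop) (ae_of_all _ fun x => ?_)
    rw [norm_of_nonneg (by positivity)]
    calc _ ≤ rexp (-g xs) * rexp (-(b * ‖x - xk‖ ^ 2 / 2)) := by gcongr; exact hmin x
      _ = _ := by ring_nf
  have hpointwise (x : V) : rexp (-g xs - D) * rexp (-((a + b) / 2) * ‖x - m‖ ^ 2) ≤
      rexp (-g x) * rexp (-(b * ‖x - xk‖ ^ 2 / 2)) := by
    rw [← exp_add, ← exp_add, exp_le_exp]
    have hsquare : a * ‖x - xs‖ ^ 2 + b * ‖x - xk‖ ^ 2 =
        (a + b) * ‖x - m‖ ^ 2 + a * b / (a + b) * ‖xs - xk‖ ^ 2 :=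
      mul_norm_sub_sq_add_mul_norm_sub_sq hab.ne' x xs xk
    linear_combination hle x + hsquare / 2 + hD
  calc rexp (-g xs) * (2 * π / (a + b)) ^ (finrank ℝ V / 2 : ℝ) * rexp (-D)
      = ∫ x, rexp (-g xs - D) * rexp (-((a + b) / 2) * ‖x - m‖ ^ 2) := by
        rw [integral_const_mul, integral_exp_neg_mul_norm_sub_sq (half_pos hab), sub_eq_add_neg,
          exp_add]
        field_simp
    _ ≤ _ := integral_mono_of_nonneg (ae_of_all _ fun x => by positivity) hintegrable
        (ae_of_all _ hpointwise)

end GaussianLowerBound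

theorem Epsi_lower_bound_general
    (d : ℕ)
    (f : EuclideanSpace ℝ (Fin d) → ℝ) (hf : Measurable f)
    (xs : EuclideanSpace ℝ (Fin d)) (l L : ℝ) (hl : 0 < l) (hlL : l ≤ L)
    (hlow : ∀ x, f xs + l / 2 * ‖x - xs‖ ^ 2 ≤ f x)
    (hup : ∀ x, f x ≤ f xs + L / 2 * ‖x - xs‖ ^ 2)
    (k : ℕ) (lam ρ : ℝ) (hlam : 0 < lam) (hρ0 : 0 < ρ)
    (xk : EuclideanSpace ℝ (Fin d))
    (Eψ : ℝ)
    (hEψ : Eψ = ((ρ ^ k)⁻¹ * lam / (2 * π)) ^ ((d : ℝ) / 2) *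
      ∫ x : EuclideanSpace ℝ (Fin d),
        Real.exp (-((ρ ^ k)⁻¹ * f x)) *
          Real.exp (-((ρ ^ k)⁻¹ * lam * ‖x - xk‖ ^ 2 / 2))) :
    Real.exp (-((ρ ^ k)⁻¹ * f xs)) * (lam / (L + lam)) ^ ((d : ℝ) / 2) *
        Real.exp (-((ρ ^ k)⁻¹ * L * lam * ‖xk - xs‖ ^ 2 / (2 * (L + lam))))
      ≤ Eψ := by
  set β := (ρ ^ k)⁻¹
  have hβ : 0 < β := by positivity
  have hL : 0 < L := hl.trans_le hlL
  have hmin (x : EuclideanSpace ℝ (Fin d)) : β * f xs ≤ β * f x := by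
    gcongr
    exact (le_add_of_nonneg_right (by positivity)).trans (hlow x)
  have hle (x : EuclideanSpace ℝ (Fin d)) : β * f x ≤ β * f xs + β * L / 2 * ‖x - xs‖ ^ 2 := by
    linear_combination β * hup x
  have hbound := le_integral_exp_neg_mul_exp_neg_norm_sub_sq (hf.const_mul β) (xk := xk)
    (by positivity : 0 ≤ β * L) (by positivity : 0 < β * lam) hmin hle
  rw [finrank_euclideanSpace_fin] at hbound
  have hconst : (β * lam / (2 * π)) ^ ((d : ℝ) / 2) * (2 * π / (β * L + β * lam)) ^ ((d : ℝ) / 2)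
      = (lam / (L + lam)) ^ ((d : ℝ) / 2) := by
    rw [← mul_rpow (by positivity) (by positivity)]
    congr 1
    field_simp
  have hexponent : β * L * (β * lam) / (β * L + β * lam) * ‖xs - xk‖ ^ 2 / 2
      = β * L * lam * ‖xk - xs‖ ^ 2 / (2 * (L + lam)) := by
    rw [norm_sub_rev]
    field_simp
  calc _ = (β * lam / (2 * π)) ^ ((d : ℝ) / 2) * (rexp (-(β * f xs)) *
        (2 * π / (β * L + β * lam)) ^ ((d : ℝ) / 2) *
        rexp (-(β * L * (β * lam) / (β * L + β * lam) * ‖xs - xk‖ ^ 2 / 2))) := by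
        rw [← hconst, ← hexponent]
        ring
    _ ≤ _ := mul_le_mul_of_nonneg_left hbound (by positivity)
    _ = Eψ := hEψ.symm

/-- Lower bound for `E[ψ_k]` (from the proof of Lemma 3.4). -/
theorem Epsi_lower_bound
    (d : ℕ) (hd : 1 ≤ d)
    (f : EuclideanSpace ℝ (Fin d) → ℝ) (hf : Measurable f)
    (xs : EuclideanSpace ℝ (Fin d)) (l L : ℝ) (hl : 0 < l) (hlL : l ≤ L)
    (hlow : ∀ x, f xs + l / 2 * ‖x - xs‖ ^ 2 ≤ f x)
    (hup : ∀ x, f x ≤ f xs + L / 2 * ‖x - xs‖ ^ 2)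
    (k : ℕ) (lam ρ : ℝ) (hlam : 0 < lam) (hρ0 : 0 < ρ) (hρ1 : ρ < 1)
    (xk : EuclideanSpace ℝ (Fin d))
    (Eψ : ℝ)
    (hEψ : Eψ = ((ρ ^ k)⁻¹ * lam / (2 * π)) ^ ((d : ℝ) / 2) *
      ∫ x : EuclideanSpace ℝ (Fin d),
        Real.exp (-((ρ ^ k)⁻¹ * f x)) *
          Real.exp (-((ρ ^ k)⁻¹ * lam * ‖x - xk‖ ^ 2 / 2))) :
    Real.exp (-((ρ ^ k)⁻¹ * f xs)) * (lam / (L + lam)) ^ ((d : ℝ) / 2) *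
        Real.exp (-((ρ ^ k)⁻¹ * L * lam * ‖xk - xs‖ ^ 2 / (2 * (L + lam))))
      ≤ Eψ :=
  Epsi_lower_bound_general d f hf xs l L hl hlL hlow hup k lam ρ hlam hρ0 xk Eψ hEψ
end

section
/- Under Assumption A, let k ∈ ℕ, λ > 0, ρ ∈ (0,1), M > 0, and x_k ∈ ℝ^d with ‖x_k − x*‖₂² ≤ ρ^k M, and define m_k² = (ρ^{−k}λ/(2π))^{d/2} ∫_{ℝ^d} (f(x) − f*)² exp(−(ρ^{−k}λ/2)‖x − x_k‖₂²) dx. Then m_k > 0 and c ρ^{−k} ≤ m_k^{−1} ≤ C ρ^{−k}, where c = 2λ/(L d √(3 + 6Mλ + M²λ²)) and C = 2λ/(l √(3d)). -/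
/-!
With `v = ρ^k / λ`, `m_k²` is the mean of `(f X - f*)²` for `X ~ 𝒩(x_k, v I_d)`. Quadratic growth
squeezes this mean between `(l/2)²` and `(L/2)²` times `𝔼‖X - x*‖⁴`. Write `X - x* = Z + w` with
`Z` centred and `w = x_k - x*`. Then `𝔼‖Z + w‖⁴ = (𝔼‖Z + w‖²)² + Var ‖Z + w‖²`, and since
`‖Z + w‖²` is a sum of independent coordinate terms, its variance splits, giving
`𝔼‖Z + w‖⁴ = (d v + ‖w‖²)² + 2 d v² + 4 v ‖w‖²`. As `0 ≤ ‖w‖² ≤ λ M v`, this lies between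
`3 d v²` and `d² v² (3 + 6 λ M + λ² M²)`; taking square roots gives the bounds on `m_k⁻¹`.
-/

open MeasureTheory ProbabilityTheory Real
open scoped NNReal ENNReal Nat

theorem integral_pow_even_mul_exp_neg_mul_sq {b : ℝ} (hb : 0 < b) (k : ℕ) :
    ∫ x : ℝ, x ^ (2 * k) * exp (-b * x ^ 2) = Gamma (k + 1 / 2) / b ^ ((k : ℝ) + 1 / 2) := by
  have habs : ∫ x : ℝ, |x| ^ (2 * k) * exp (-b * |x| ^ 2)
      = ∫ x : ℝ, x ^ (2 * k) * exp (-b * x ^ 2) := by simp only [pow_mul, sq_abs]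
  have hrpow : ∀ x ∈ Set.Ioi (0 : ℝ), x ^ (2 * k) * exp (-b * x ^ 2)
      = x ^ ((2 * k : ℕ) : ℝ) * exp (-b * x ^ (2 : ℝ)) := fun x _ => by
    rw [rpow_natCast, rpow_two]
  rw [← habs, integral_comp_abs (f := fun r => r ^ (2 * k) * exp (-b * r ^ 2)),
    setIntegral_congr_fun measurableSet_Ioi hrpow, integral_rpow_mul_exp_neg_mul_rpow two_pos
      (neg_one_lt_zero.trans_le (Nat.cast_nonneg _)) hb]
  have e : ((2 * k : ℕ) + 1 : ℝ) / 2 = k + 1 / 2 := by push_cast; ring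
  have e' : -((2 * k : ℕ) + 1 : ℝ) / 2 = -(k + 1 / 2) := by push_cast; ring
  rw [e, e', rpow_neg hb.le]
  field_simp

section GaussianReal

variable {v : ℝ≥0}

theorem integral_pow_even_gaussianReal (hv : v ≠ 0) (k : ℕ) :
    ∫ x, x ^ (2 * k) ∂gaussianReal 0 v = (2 * k - 1 : ℕ)‼ * (v : ℝ) ^ k := by
  have hv' : (0 : ℝ) < v := by positivity
  have hexp : ∀ x : ℝ, gaussianPDFReal 0 v x • x ^ (2 * k)
      = (√(2 * π * v))⁻¹ * (x ^ (2 * k) * exp (-(2 * v : ℝ)⁻¹ * x ^ 2)) := fun x => by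
    simp only [gaussianPDFReal_def, smul_eq_mul, sub_zero]
    rw [show -x ^ 2 / (2 * (v : ℝ)) = -(2 * v : ℝ)⁻¹ * x ^ 2 by ring]
    ring
  simp_rw [integral_gaussianReal_eq_integral_smul hv, hexp]
  rw [integral_const_mul, integral_pow_even_mul_exp_neg_mul_sq (by positivity), Gamma_nat_add_half,
    inv_rpow (by positivity), div_inv_eq_mul, rpow_add (by positivity), rpow_natCast,
    ← sqrt_eq_rpow, sqrt_mul' _ hv'.le, sqrt_mul (by positivity)]
  field_simp
  rw [mul_pow, sqrt_mul zero_le_two]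
  ring

theorem integral_pow_odd_gaussianReal (k : ℕ) :
    ∫ x, x ^ (2 * k + 1) ∂gaussianReal 0 v = 0 := by
  have h : ∫ x, x ^ (2 * k + 1) ∂(gaussianReal 0 v).map (fun x => -x)
      = ∫ x, (-x) ^ (2 * k + 1) ∂gaussianReal 0 v :=
    integral_map measurable_neg.aemeasurable (by fun_prop)
  rw [gaussianReal_map_neg, neg_zero] at h
  simp only [Odd.neg_pow ⟨k, rfl⟩, integral_neg] at h
  linarith

theorem integrable_pow_gaussianReal (μ : ℝ) (n : ℕ) :
    Integrable (fun x => x ^ n) (gaussianReal μ v) :=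
  ((memLp_id_gaussianReal n).integrable_norm_pow').mono' (by fun_prop)
    (Filter.Eventually.of_forall fun x => by simp [norm_pow])

theorem integrable_add_const_pow_gaussianReal (μ c : ℝ) (n : ℕ) :
    Integrable (fun x => (x + c) ^ n) (gaussianReal μ v) := by
  simp_rw [add_pow]
  exact integrable_finsetSum _ fun m _ => ((integrable_pow_gaussianReal μ m).mul_const _).mul_const _

theorem integral_add_const_sq_gaussianReal (hv : v ≠ 0) (c : ℝ) :
    ∫ x, (x + c) ^ 2 ∂gaussianReal 0 v = v + c ^ 2 := by
  have m1 : ∫ x, x ^ 1 ∂gaussianReal 0 v = 0 := integral_pow_odd_gaussianReal 0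
  have m2 : ∫ x, x ^ 2 ∂gaussianReal 0 v = v := by simpa using integral_pow_even_gaussianReal hv 1
  simp_rw [add_pow]
  rw [integral_finsetSum _ fun m _ => ((integrable_pow_gaussianReal 0 m).mul_const _).mul_const _]
  simp only [Finset.sum_range_succ, Finset.sum_range_zero, integral_mul_const, m1, m2, pow_zero,
    integral_const, probReal_univ, smul_eq_mul, Nat.choose_zero_right, Nat.choose_succ_self_right,
    Nat.choose_self]
  ring

theorem integral_add_const_pow_four_gaussianReal (hv : v ≠ 0) (c : ℝ) :
    ∫ x, (x + c) ^ 4 ∂gaussianReal 0 v = 3 * v ^ 2 + 6 * v * c ^ 2 + c ^ 4 := by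
  have m1 : ∫ x, x ^ 1 ∂gaussianReal 0 v = 0 := integral_pow_odd_gaussianReal 0
  have m2 : ∫ x, x ^ 2 ∂gaussianReal 0 v = v := by simpa using integral_pow_even_gaussianReal hv 1
  have m3 : ∫ x, x ^ 3 ∂gaussianReal 0 v = 0 := integral_pow_odd_gaussianReal 1
  have m4 : ∫ x, x ^ 4 ∂gaussianReal 0 v = 3 * v ^ 2 := by
    simpa using integral_pow_even_gaussianReal hv 2
  simp_rw [add_pow]
  rw [integral_finsetSum _ fun m _ => ((integrable_pow_gaussianReal 0 m).mul_const _).mul_const _]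
  simp only [Finset.sum_range_succ, Finset.sum_range_zero, integral_mul_const, m1, m2, m3, m4]
  simp only [pow_zero, integral_const, probReal_univ, smul_eq_mul, Nat.choose]
  ring

theorem memLp_add_const_sq_gaussianReal (μ c : ℝ) :
    MemLp (fun x => (x + c) ^ 2) 2 (gaussianReal μ v) := by
  rw [memLp_two_iff_integrable_sq (by fun_prop)]
  simpa [← pow_mul] using integrable_add_const_pow_gaussianReal μ c 4

theorem variance_add_const_sq_gaussianReal (hv : v ≠ 0) (c : ℝ) :
    Var[fun x => (x + c) ^ 2; gaussianReal 0 v] = 2 * v ^ 2 + 4 * v * c ^ 2 := by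
  rw [variance_eq_sub (memLp_add_const_sq_gaussianReal 0 c)]
  simp only [Pi.pow_apply, ← pow_mul]
  rw [integral_add_const_pow_four_gaussianReal hv, integral_add_const_sq_gaussianReal hv]
  ring

end GaussianReal

section PiGaussianReal

variable {v : ℝ≥0} {ι : Type*} [Fintype ι]

theorem norm_toLp_add_sq (y : ι → ℝ) (w : EuclideanSpace ℝ ι) :
    ‖WithLp.toLp 2 y + w‖ ^ 2 = ∑ i, (y i + w i) ^ 2 := by
  simp [EuclideanSpace.norm_sq_eq]

theorem memLp_sum_add_const_sq_pi_gaussianReal (w : ι → ℝ) :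
    MemLp (∑ i, fun y : ι → ℝ => (y i + w i) ^ 2) 2 (Measure.pi fun _ => gaussianReal 0 v) :=
  memLp_finsetSum' _ fun i _ =>
    (memLp_add_const_sq_gaussianReal 0 (w i)).comp_measurePreserving (measurePreserving_eval _ i)

theorem integrable_norm_add_pow_four_pi_gaussianReal (w : EuclideanSpace ℝ ι) :
    Integrable (fun y => ‖WithLp.toLp 2 y + w‖ ^ 4) (Measure.pi fun _ => gaussianReal 0 v) := by
  have h := (memLp_sum_add_const_sq_pi_gaussianReal (v := v) w).integrable_sq
  simp only [Finset.sum_apply] at h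
  refine h.congr (Filter.Eventually.of_forall fun y => ?_)
  simp only [show 4 = 2 * 2 from rfl, pow_mul, norm_toLp_add_sq]

theorem integral_norm_add_pow_four_pi_gaussianReal (hv : v ≠ 0) (w : EuclideanSpace ℝ ι) :
    ∫ y, ‖WithLp.toLp 2 y + w‖ ^ 4 ∂(Measure.pi fun _ : ι => gaussianReal 0 v)
      = (Fintype.card ι * v + ‖w‖ ^ 2) ^ 2 + 2 * Fintype.card ι * v ^ 2 + 4 * v * ‖w‖ ^ 2 := by
  set S : (ι → ℝ) → ℝ := ∑ i, fun y => (y i + w i) ^ 2 with hS_def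
  have hX : ∀ i, MemLp (fun t => (t + w i) ^ 2) 2 (gaussianReal 0 v) :=
    fun i => memLp_add_const_sq_gaussianReal 0 (w i)
  have hmean : (Measure.pi fun _ : ι => gaussianReal 0 v)[S] = Fintype.card ι * v + ‖w‖ ^ 2 := by
    have h1 : ∀ i, ∫ y : ι → ℝ, (y i + w i) ^ 2 ∂(Measure.pi fun _ : ι => gaussianReal 0 v)
        = v + w i ^ 2 := fun i => by
      rw [integral_comp_eval (μ := fun _ => gaussianReal 0 v) (hX i).aestronglyMeasurable,
        integral_add_const_sq_gaussianReal hv]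
    simp only [hS_def, Finset.sum_apply]
    rw [integral_finsetSum _ fun i _ =>
      integrable_comp_eval (μ := fun _ => gaussianReal 0 v) ((hX i).integrable one_le_two)]
    simp_rw [h1, Finset.sum_add_distrib, EuclideanSpace.norm_sq_eq]
    simp
  have hvar : Var[S; Measure.pi fun _ : ι => gaussianReal 0 v]
      = 2 * Fintype.card ι * v ^ 2 + 4 * v * ‖w‖ ^ 2 := by
    rw [hS_def, variance_sum_pi hX]
    simp_rw [variance_add_const_sq_gaussianReal hv, Finset.sum_add_distrib,
      EuclideanSpace.norm_sq_eq, ← Finset.mul_sum]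
    simp only [Finset.sum_const, Finset.card_univ, nsmul_eq_mul, norm_eq_abs, sq_abs]
    ring
  rw [variance_eq_sub (memLp_sum_add_const_sq_pi_gaussianReal w), hmean] at hvar
  have hnorm : ∀ y, ‖WithLp.toLp 2 y + w‖ ^ 4 = (S ^ 2) y := fun y => by
    rw [show 4 = 2 * 2 from rfl, pow_mul, norm_toLp_add_sq]
    simp [hS_def, Finset.sum_apply]
  simp_rw [hnorm]
  linarith

end PiGaussianReal

theorem MeasureTheory.lintegral_fin_nat_prod_eq_prod {n : ℕ} {E : Type*} [MeasurableSpace E]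
    {μ : Fin n → Measure E} [∀ i, SigmaFinite (μ i)]
    {f : Fin n → E → ℝ≥0∞} (hf : ∀ i, Measurable (f i)) :
    ∫⁻ x : Fin n → E, ∏ i, f i (x i) ∂(Measure.pi μ) = ∏ i, ∫⁻ x, f i x ∂(μ i) := by
  induction n with
  | zero => simp
  | succ n ih =>
      rw [← ((measurePreserving_piFinSuccAbove μ 0).symm).lintegral_comp_emb
        (MeasurableEquiv.measurableEmbedding _)]
      simp_rw [MeasurableEquiv.piFinSuccAbove_symm_apply, Fin.insertNthEquiv,
        Fin.prod_univ_succ, Fin.insertNth_zero, Equiv.coe_fn_mk, Fin.cons_succ,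
        Fin.zero_succAbove, Fin.cons_zero, cast_eq]
      rw [lintegral_prod_mul (f := f 0) (g := fun y : Fin n → E => ∏ i, f i.succ (y i))
        (hf 0).aemeasurable
        (Finset.measurable_prod _ fun i _ => (hf _).comp (measurable_pi_apply i)).aemeasurable,
        ih (fun i => hf _)]

theorem MeasureTheory.Measure.pi_fin_nat_withDensity {n : ℕ} {E : Type*} [MeasurableSpace E]
    {μ : Fin n → Measure E} [∀ i, SigmaFinite (μ i)]
    {f : Fin n → E → ℝ≥0∞} (hf : ∀ i, Measurable (f i))
    [∀ i, SigmaFinite ((μ i).withDensity (f i))] :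
    Measure.pi (fun i => (μ i).withDensity (f i))
      = (Measure.pi μ).withDensity (fun x => ∏ i, f i (x i)) := by
  refine Measure.pi_eq fun s hs => ?_
  rw [withDensity_apply _ (MeasurableSet.univ_pi hs), Measure.restrict_pi_pi,
    lintegral_fin_nat_prod_eq_prod hf]
  simp_rw [withDensity_apply _ (hs _)]

section GaussianSmoothing

variable {v : ℝ≥0} {n : ℕ}

theorem integral_pi_gaussianReal_eq_integral_prod_gaussianPDFReal_mul (hv : v ≠ 0)
    (F : (Fin n → ℝ) → ℝ) :
    ∫ y, F y ∂(Measure.pi fun _ => gaussianReal 0 v)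
      = ∫ y, (∏ i, gaussianPDFReal 0 v (y i)) * F y := by
  have hpdf : ∀ _ : Fin n, Measurable (gaussianPDF 0 v) := fun _ => measurable_gaussianPDF 0 v
  have : IsProbabilityMeasure (volume.withDensity (gaussianPDF 0 v)) := by
    rw [← gaussianReal_of_var_ne_zero 0 hv]; infer_instance
  simp_rw [gaussianReal_of_var_ne_zero 0 hv]
  rw [Measure.pi_fin_nat_withDensity hpdf, ← volume_pi, integral_withDensity_eq_integral_toReal_smul
    (Finset.measurable_prod _ fun i _ => (hpdf i).comp (measurable_pi_apply i) :
      Measurable fun y : Fin n → ℝ => ∏ i, gaussianPDF 0 v (y i))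
    (Filter.Eventually.of_forall fun y => ENNReal.prod_lt_top fun i _ => gaussianPDF_lt_top)]
  simp [ENNReal.toReal_prod]

theorem prod_gaussianPDFReal (y : Fin n → ℝ) :
    ∏ i, gaussianPDFReal 0 v (y i) = (√(2 * π * v))⁻¹ ^ n * exp (-(∑ i, y i ^ 2) / (2 * v)) := by
  simp only [gaussianPDFReal_def, sub_zero, Finset.prod_mul_distrib, Finset.prod_const,
    Finset.card_univ, Fintype.card_fin, ← exp_sum, Finset.sum_div, neg_div]
  simp [Finset.sum_neg_distrib]

theorem integral_pi_gaussianReal_eq_integral_mul_exp (hv : v ≠ 0)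
    (F : EuclideanSpace ℝ (Fin n) → ℝ) (x₀ : EuclideanSpace ℝ (Fin n)) :
    ∫ y, F (x₀ + WithLp.toLp 2 y) ∂(Measure.pi fun _ => gaussianReal 0 v)
      = (2 * π * v)⁻¹ ^ ((n : ℝ) / 2) * ∫ x, F x * exp (-‖x - x₀‖ ^ 2 / (2 * v)) := by
  have hs : 0 < √(2 * π * v) := by positivity
  have hnorm : (2 * π * v)⁻¹ ^ ((n : ℝ) / 2) = (√(2 * π * v))⁻¹ ^ n := by
    rw [← sqrt_inv, sqrt_eq_rpow, ← rpow_natCast, ← rpow_mul (by positivity)]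
    ring_nf
  rw [hnorm, integral_pi_gaussianReal_eq_integral_prod_gaussianPDFReal_mul hv, ← integral_const_mul,
    ← integral_add_left_eq_self _ x₀,
    ← (PiLp.volume_preserving_toLp (Fin n)).integral_comp
      (MeasurableEquiv.toLp 2 _).measurableEmbedding]
  congr 1 with y
  rw [prod_gaussianPDFReal, EuclideanSpace.norm_sq_eq]
  simp only [add_sub_cancel_left, Real.norm_eq_abs, sq_abs]
  ring

end GaussianSmoothing

theorem integral_sq_sub_bounds_of_quadratic_growth {Ω E : Type*} [MeasurableSpace Ω]
    [NormedAddCommGroup E] [MeasurableSpace E] {μ : Measure Ω} {f : E → ℝ} {X : Ω → E}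
    {x₀ : E} {l L : ℝ} (hf : Measurable f) (hX : Measurable X) (hl : 0 ≤ l)
    (hlow : ∀ x, f x₀ + l / 2 * ‖x - x₀‖ ^ 2 ≤ f x) (hup : ∀ x, f x ≤ f x₀ + L / 2 * ‖x - x₀‖ ^ 2)
    (hint : Integrable (fun ω => ‖X ω - x₀‖ ^ 4) μ) :
    (l / 2) ^ 2 * ∫ ω, ‖X ω - x₀‖ ^ 4 ∂μ ≤ ∫ ω, (f (X ω) - f x₀) ^ 2 ∂μ ∧
      ∫ ω, (f (X ω) - f x₀) ^ 2 ∂μ ≤ (L / 2) ^ 2 * ∫ ω, ‖X ω - x₀‖ ^ 4 ∂μ := by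
  have hpt : ∀ x, (l / 2) ^ 2 * ‖x - x₀‖ ^ 4 ≤ (f x - f x₀) ^ 2 ∧
      (f x - f x₀) ^ 2 ≤ (L / 2) ^ 2 * ‖x - x₀‖ ^ 4 := fun x => by
    have h0 : 0 ≤ l / 2 * ‖x - x₀‖ ^ 2 := by positivity
    have h1 : l / 2 * ‖x - x₀‖ ^ 2 ≤ f x - f x₀ := by linarith [hlow x]
    have h2 : f x - f x₀ ≤ L / 2 * ‖x - x₀‖ ^ 2 := by linarith [hup x]
    constructor
    · nlinarith [pow_le_pow_left₀ h0 h1 2]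
    · nlinarith [pow_le_pow_left₀ (h0.trans h1) h2 2]
  have hmid : Integrable (fun ω => (f (X ω) - f x₀) ^ 2) μ :=
    (hint.const_mul ((L / 2) ^ 2)).mono'
      (((hf.comp hX).sub_const _).pow_const 2).aestronglyMeasurable
      (Filter.Eventually.of_forall fun ω => by
        rw [Real.norm_of_nonneg (sq_nonneg _)]; exact (hpt (X ω)).2)
  rw [← integral_const_mul, ← integral_const_mul]
  exact ⟨integral_mono (hint.const_mul _) hmid fun ω => (hpt (X ω)).1,
    integral_mono hmid (hint.const_mul _) fun ω => (hpt (X ω)).2⟩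

theorem inv_sqrt_mem_Icc_of_sq_le_of_le_sq {a b m : ℝ} (ha : 0 < a) (hlo : a ^ 2 ≤ m)
    (hhi : m ≤ b ^ 2) : 0 < √m ∧ b⁻¹ ≤ (√m)⁻¹ ∧ (√m)⁻¹ ≤ a⁻¹ := by
  have hm : 0 < √m := sqrt_pos.2 (lt_of_lt_of_le (by positivity) hlo)
  refine ⟨hm, ?_, inv_anti₀ ha ((le_sqrt' ha).2 hlo)⟩
  rcases le_or_gt b 0 with hb | hb
  · exact (inv_nonpos.2 hb).trans (inv_pos.2 hm).le
  · exact inv_anti₀ hm (sqrt_le_iff.2 ⟨hb.le, hhi⟩)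

theorem shifted_fourth_moment_bounds {n v s K : ℝ} (hn : 1 ≤ n) (hv : 0 < v) (hs0 : 0 ≤ s)
    (hs : s ≤ K * v) :
    3 * n * v ^ 2 ≤ (n * v + s) ^ 2 + 2 * n * v ^ 2 + 4 * v * s ∧
      (n * v + s) ^ 2 + 2 * n * v ^ 2 + 4 * v * s ≤ n ^ 2 * v ^ 2 * (3 + 6 * K + K ^ 2) := by
  have hK : 0 ≤ K := nonneg_of_mul_nonneg_left (hs0.trans hs) hv
  constructor
  · nlinarith [mul_nonneg (mul_nonneg (by linarith : 0 ≤ n) (sub_nonneg.2 hn)) (sq_nonneg v),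
      mul_nonneg (mul_nonneg (by linarith : 0 ≤ n) hv.le) hs0]
  · calc
      _ ≤ (n * v + K * v) ^ 2 + 2 * n * v ^ 2 + 4 * v * (K * v) := by gcongr
      _ = v ^ 2 * ((n + K) ^ 2 + 2 * n + 4 * K) := by ring
      _ ≤ v ^ 2 * (n ^ 2 * (3 + 6 * K + K ^ 2)) := by
        gcongr
        nlinarith [mul_le_mul_of_nonneg_right (one_le_pow₀ hn : 1 ≤ n ^ 2) (sq_nonneg K),
          mul_le_mul_of_nonneg_right (one_le_pow₀ hn : 1 ≤ n ^ 2) hK,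
          mul_le_mul_of_nonneg_right (le_self_pow₀ hn two_ne_zero) hK]
      _ = _ := by ring

theorem integral_sq_sub_pi_gaussianReal_bounds {ι : Type*} [Fintype ι] [Nonempty ι] {v : ℝ≥0}
    (hv : v ≠ 0) {f : EuclideanSpace ℝ ι → ℝ} (hf : Measurable f) {x₀ x₁ : EuclideanSpace ℝ ι}
    {l L K : ℝ} (hl : 0 ≤ l) (hlow : ∀ x, f x₀ + l / 2 * ‖x - x₀‖ ^ 2 ≤ f x)
    (hup : ∀ x, f x ≤ f x₀ + L / 2 * ‖x - x₀‖ ^ 2) (hx₁ : ‖x₁ - x₀‖ ^ 2 ≤ K * v) :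
    (l / 2) ^ 2 * (3 * Fintype.card ι * v ^ 2)
      ≤ ∫ y, (f (x₁ + WithLp.toLp 2 y) - f x₀) ^ 2 ∂(Measure.pi fun _ => gaussianReal 0 v) ∧
    ∫ y, (f (x₁ + WithLp.toLp 2 y) - f x₀) ^ 2 ∂(Measure.pi fun _ => gaussianReal 0 v)
      ≤ (L / 2) ^ 2 * (Fintype.card ι ^ 2 * v ^ 2 * (3 + 6 * K + K ^ 2)) := by
  have hshift : ∀ y, x₁ + WithLp.toLp 2 y - x₀ = WithLp.toLp 2 y + (x₁ - x₀) := fun y => by abel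
  obtain ⟨hlo, hhi⟩ := integral_sq_sub_bounds_of_quadratic_growth
    (μ := Measure.pi fun _ => gaussianReal 0 v) (X := fun y => x₁ + WithLp.toLp 2 y) hf
    (by fun_prop) hl hlow hup
    (by simpa only [hshift] using integrable_norm_add_pow_four_pi_gaussianReal _)
  simp only [hshift, integral_norm_add_pow_four_pi_gaussianReal hv] at hlo hhi
  obtain ⟨hE_lo, hE_hi⟩ := shifted_fourth_moment_bounds
    (Nat.one_le_cast.2 (Fintype.card_pos (α := ι)))
    (NNReal.coe_pos.2 (pos_iff_ne_zero.2 hv)) (sq_nonneg _) hx₁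
  exact ⟨(mul_le_mul_of_nonneg_left hE_lo (sq_nonneg _)).trans hlo,
    hhi.trans (mul_le_mul_of_nonneg_left hE_hi (sq_nonneg _))⟩

theorem mk_inv_bounds_general
    (d : ℕ) (hd : 1 ≤ d)
    (f : EuclideanSpace ℝ (Fin d) → ℝ) (hf : Measurable f)
    (xs : EuclideanSpace ℝ (Fin d)) (l L : ℝ) (hl : 0 < l)
    (hlow : ∀ x, f xs + l / 2 * ‖x - xs‖ ^ 2 ≤ f x)
    (hup : ∀ x, f x ≤ f xs + L / 2 * ‖x - xs‖ ^ 2)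
    (k : ℕ) (lam ρ M : ℝ) (hlam : 0 < lam) (hρ0 : 0 < ρ)
    (xk : EuclideanSpace ℝ (Fin d))
    (hxk : ‖xk - xs‖ ^ 2 ≤ ρ ^ k * M)
    (mk2 : ℝ)
    (hmk2 : mk2 = ((ρ ^ k)⁻¹ * lam / (2 * π)) ^ ((d : ℝ) / 2) *
      ∫ x : EuclideanSpace ℝ (Fin d),
        (f x - f xs) ^ 2 * Real.exp (-((ρ ^ k)⁻¹ * lam / 2 * ‖x - xk‖ ^ 2)))
    (c C : ℝ)
    (hc : c = 2 * lam / (L * d * Real.sqrt (3 + 6 * M * lam + M ^ 2 * lam ^ 2)))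
    (hC : C = 2 * lam / (l * Real.sqrt (3 * d))) :
    0 < Real.sqrt mk2 ∧
      c * (ρ ^ k)⁻¹ ≤ (Real.sqrt mk2)⁻¹ ∧
      (Real.sqrt mk2)⁻¹ ≤ C * (ρ ^ k)⁻¹ := by
  set v : ℝ≥0 := ⟨ρ ^ k / lam, by positivity⟩
  have hv : (v : ℝ) = ρ ^ k / lam := rfl
  have hv0 : v ≠ 0 := (NNReal.coe_pos.1 (by rw [hv]; positivity)).ne'
  have hmean : mk2 = ∫ y, (f (xk + WithLp.toLp 2 y) - f xs) ^ 2
      ∂(Measure.pi fun _ => gaussianReal 0 v) := by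
    rw [hmk2, integral_pi_gaussianReal_eq_integral_mul_exp hv0 (fun x => (f x - f xs) ^ 2) xk]
    congr 2
    · rw [hv]; field_simp
    · ext x; rw [hv]; field_simp
  have hs : ‖xk - xs‖ ^ 2 ≤ lam * M * v := hxk.trans_eq (by rw [hv]; field_simp)
  have : Nonempty (Fin d) := ⟨⟨0, hd⟩⟩
  obtain ⟨hlo, hhi⟩ := integral_sq_sub_pi_gaussianReal_bounds hv0 hf hl.le hlow hup hs
  rw [← hmean, Fintype.card_fin] at hlo hhi
  set R := 3 + 6 * M * lam + M ^ 2 * lam ^ 2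
  have hR : 0 ≤ R := by
    nlinarith [nonneg_of_mul_nonneg_left ((sq_nonneg _).trans hs) (NNReal.coe_pos.2 hv0.bot_lt)]
  obtain ⟨hpos, hc', hC'⟩ := inv_sqrt_mem_Icc_of_sq_le_of_le_sq
    (a := l * √(3 * d) * v / 2) (b := L * d * √R * v / 2) (by positivity)
    (le_of_eq_of_le (by rw [div_pow, mul_pow, mul_pow, sq_sqrt (by positivity)]; ring) hlo)
    (hhi.trans_eq (by
      rw [show (L * d * √R * v / 2) ^ 2 = L ^ 2 * d ^ 2 * √R ^ 2 * v ^ 2 / 4 by ring, sq_sqrt hR]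
      ring))
  refine ⟨hpos, ?_, ?_⟩
  · convert hc' using 1; rw [hc, hv]; field_simp
  · convert hC' using 1; rw [hC, hv]; field_simp

/-- Theorem 3.4: upper and lower bounds for `m_k⁻¹` where
`m_k² = E[(f(x) − f*)²]` under the Gaussian `N(x_k, ρ^k λ⁻¹ I_d)`. -/
theorem mk_inv_bounds
    (d : ℕ) (hd : 1 ≤ d)
    (f : EuclideanSpace ℝ (Fin d) → ℝ) (hf : Measurable f)
    (xs : EuclideanSpace ℝ (Fin d)) (l L : ℝ) (hl : 0 < l) (hlL : l ≤ L)
    (hlow : ∀ x, f xs + l / 2 * ‖x - xs‖ ^ 2 ≤ f x)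
    (hup : ∀ x, f x ≤ f xs + L / 2 * ‖x - xs‖ ^ 2)
    (k : ℕ) (lam ρ M : ℝ) (hlam : 0 < lam) (hρ0 : 0 < ρ) (hρ1 : ρ < 1) (hM : 0 < M)
    (xk : EuclideanSpace ℝ (Fin d))
    (hxk : ‖xk - xs‖ ^ 2 ≤ ρ ^ k * M)
    (mk2 : ℝ)
    (hmk2 : mk2 = ((ρ ^ k)⁻¹ * lam / (2 * π)) ^ ((d : ℝ) / 2) *
      ∫ x : EuclideanSpace ℝ (Fin d),
        (f x - f xs) ^ 2 * Real.exp (-((ρ ^ k)⁻¹ * lam / 2 * ‖x - xk‖ ^ 2)))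
    (c C : ℝ)
    (hc : c = 2 * lam / (L * d * Real.sqrt (3 + 6 * M * lam + M ^ 2 * lam ^ 2)))
    (hC : C = 2 * lam / (l * Real.sqrt (3 * d))) :
    0 < Real.sqrt mk2 ∧
      c * (ρ ^ k)⁻¹ ≤ (Real.sqrt mk2)⁻¹ ∧
      (Real.sqrt mk2)⁻¹ ≤ C * (ρ ^ k)⁻¹ :=
  mk_inv_bounds_general d hd f hf xs l L hl hlow hup k lam ρ M hlam hρ0 xk hxk mk2 hmk2 c C hc hC
end
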